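/- Let I^c be a non-null intricacy, d ≥ 2 and x ∈ [0,1]. If X^N ∈ X(d,N) is a sequence with lim_{N→∞} H(X^N)/(N log d) = x, then limsup_{N→∞} I^c(X^N)/(N log d) ≤ i^c(x). -/

import Mathlib

open Filter

noncomputable def entropy {α : Type*} [Fintype α] (p : α → ℝ) : ℝ :=
  -∑ x, p x * Real.log (p x)

def IsPMF {α : Type*} [Fintype α] (p : α → ℝ) : Prop :=
  (∀ x, 0 ≤ p x) ∧ ∑ x, p x = 1

noncomputable def margin {d N : ℕ} (μ : (Fin N → Fin d) → ℝ) (S : Finset (Fin N)) :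
    (({ i // i ∈ S }) → Fin d) → ℝ :=
  fun y => ∑ x : Fin N → Fin d, if ∀ i : { i // i ∈ S }, x i.1 = y i then μ x else 0

/-- Mutual information between `X_S` and `X_{Sᶜ}`. -/
noncomputable def MIS {d N : ℕ} (μ : (Fin N → Fin d) → ℝ) (S : Finset (Fin N)) : ℝ :=
  entropy (margin μ S) + entropy (margin μ Sᶜ) - entropy μ

/-- The Edelman–Sporns–Tononi neural complexity. -/
noncomputable def neural {d N : ℕ} (μ : (Fin N → Fin d) → ℝ) : ℝ :=
  (1 / (N + 1 : ℝ)) * ∑ S : Finset (Fin N), (1 / (N.choose S.card : ℝ)) * MIS μ S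

noncomputable def avgEntropy {d N : ℕ} (μ : (Fin N → Fin d) → ℝ) (k : ℕ) : ℝ :=
  (1 / (N.choose k : ℝ)) *
    ∑ S ∈ Finset.powersetCard k (Finset.univ : Finset (Fin N)), entropy (margin μ S)

/-- The entropy profile `h_X : [0,1] → [0,1]`, piecewise affine interpolation of
`k/N ↦ (average entropy of subsystems of size k)/(N log d)`. -/
noncomputable def profile {d N : ℕ} (μ : (Fin N → Fin d) → ℝ) (t : ℝ) : ℝ :=
  if t ≤ 0 then 0 else
    (avgEntropy μ (⌈t * N⌉.toNat - 1)
      + (t * N - ((⌈t * N⌉.toNat - 1 : ℕ) : ℝ)) *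
        (avgEntropy μ ⌈t * N⌉.toNat - avgEntropy μ (⌈t * N⌉.toNat - 1)))
      / (N * Real.log d)

open MeasureTheory

/-- The coefficients `c^N_k = ∫ t^k (1−t)^{N−k} λ(dt)` of an intricacy with representing
measure `λ`. -/
noncomputable def cNk (lam : Measure ℝ) (N k : ℕ) : ℝ :=
  ∫ t, t ^ k * (1 - t) ^ (N - k) ∂lam

/-- `lam` is the representing measure of a non-null intricacy: a probability measure carried
by `[0,1]`, invariant under `t ↦ 1 − t`, with `λ((0,1)) > 0`. -/
def IsIntricacyMeasure (lam : Measure ℝ) : Prop :=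
  IsProbabilityMeasure lam ∧ lam (Set.Icc (0:ℝ) 1)ᶜ = 0 ∧
    Measure.map (fun t : ℝ => 1 - t) lam = lam ∧ 0 < lam (Set.Ioo (0:ℝ) 1)

/-- The intricacy `I^c(X) = ∑_{S ⊆ {1,…,N}} c^N_{|S|} · MI(X_S, X_{Sᶜ})` with coefficients
represented by `lam`. -/
noncomputable def intricacy (lam : Measure ℝ) {d N : ℕ} (μ : (Fin N → Fin d) → ℝ) : ℝ :=
  ∑ S : Finset (Fin N), cNk lam N S.card * MIS μ S

/-- `i^c_N(x) = 2 ∑_{k=0}^N c^N_k C(N,k) min{k/N, x} − x`. -/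
noncomputable def icN (lam : Measure ℝ) (N : ℕ) (x : ℝ) : ℝ :=
  2 * ∑ k ∈ Finset.range (N + 1),
    cNk lam N k * (N.choose k : ℝ) * min ((k : ℝ) / N) x - x

/-- `i^c(x) = 2 ∫ min{t,x} λ(dt) − x`. -/
noncomputable def ic (lam : Measure ℝ) (x : ℝ) : ℝ :=
  2 * ∫ t, min t x ∂lam - x

/-- `‖f‖_{c,N} = ∑_{k=0}^N c^N_k C(N,k) |f(k/N)|`. -/
noncomputable def cNorm (lam : Measure ℝ) (N : ℕ) (f : ℝ → ℝ) : ℝ :=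
  ∑ k ∈ Finset.range (N + 1), cNk lam N k * (N.choose k : ℝ) * |f ((k : ℝ) / N)|

/-- The topological support of a measure on `ℝ`. -/
def mSupport (lam : Measure ℝ) : Set ℝ :=
  {x | ∀ U : Set ℝ, IsOpen U → x ∈ U → lam U ≠ 0}


/-!
With `h = H(X)/(N log d)`, the symmetry `c^N_k = c^N_{N-k}` turns the intricacy into
`I^c(X) = 2 ∑_S c^N_{|S|} H(X_S) - H(X)`. Since `H(X_S)` is at most both `|S| log d` and `H(X)`,
this gives `I^c(X)/(N log d) ≤ i^c_N(h)`. The maps `i^c_N` are `3`-Lipschitz uniformly in `N`,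
and `i^c_N(x) → i^c(x)` because `∑_k c^N_k C(N,k) f(k/N)` is the `λ`-integral of the `N`-th
Bernstein polynomial of `f`, which converges to `f` uniformly on `[0,1]`.
-/

open Topology

section Entropy

variable {α : Type*} [Fintype α]

lemma entropy_eq_sum_negMulLog (p : α → ℝ) : entropy p = ∑ x, Real.negMulLog (p x) := by
  simp [entropy, Real.negMulLog_eq_neg, Finset.sum_neg_distrib]

lemma IsPMF.le_one {p : α → ℝ} (hp : IsPMF p) (x : α) : p x ≤ 1 :=
  hp.2 ▸ Finset.single_le_sum (fun i _ => hp.1 i) (Finset.mem_univ x)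

lemma entropy_nonneg {p : α → ℝ} (hp : IsPMF p) : 0 ≤ entropy p := by
  rw [entropy_eq_sum_negMulLog]
  exact Finset.sum_nonneg fun x _ => Real.negMulLog_nonneg (hp.1 x) (hp.le_one x)

lemma entropy_le_log_card {p : α → ℝ} (hp : IsPMF p) :
    entropy p ≤ Real.log (Fintype.card α) := by
  have : Nonempty α := by
    by_contra h
    simpa [not_nonempty_iff.1 h] using hp.2
  have hn : (0 : ℝ) < Fintype.card α := by exact_mod_cast Fintype.card_pos
  have jensen := Real.concaveOn_negMulLog.le_map_sum (t := Finset.univ)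
    (w := fun _ => (Fintype.card α : ℝ)⁻¹) (p := p) (fun _ _ => by positivity)
    (by simp [hn.ne']) (fun x _ => hp.1 x)
  simp only [smul_eq_mul, ← Finset.mul_sum, hp.2, mul_one, Real.negMulLog, Real.log_inv,
    neg_mul_neg, inv_mul_le_iff₀ hn, mul_inv_cancel_left₀ hn.ne'] at jensen
  rwa [entropy_eq_sum_negMulLog]

end Entropy

section Pushforward

variable {α β : Type*} [Fintype α] [Fintype β] [DecidableEq β]

lemma IsPMF.map {p : α → ℝ} (hp : IsPMF p) (f : α → β) :
    IsPMF fun y => ∑ x, if f x = y then p x else 0 := by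
  refine ⟨fun y => Finset.sum_nonneg fun x _ => by split_ifs <;> simp [hp.1 x], ?_⟩
  rw [Finset.sum_comm, ← hp.2]
  simp

lemma entropy_map_le {p : α → ℝ} (hp : ∀ x, 0 ≤ p x) (f : α → β) :
    entropy (fun y => ∑ x, if f x = y then p x else 0) ≤ entropy p := by
  set q : β → ℝ := fun y => ∑ x, if f x = y then p x else 0
  have hpq : ∀ x, p x ≤ q (f x) := fun x => by
    simpa using Finset.single_le_sum (f := fun x' => if f x' = f x then p x' else 0)
      (fun x' _ => by split_ifs <;> simp [hp x']) (Finset.mem_univ x)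
  have hsum : ∑ y, q y * Real.log (q y) = ∑ x, p x * Real.log (q (f x)) := by
    simp only [q, Finset.sum_mul, ite_mul, zero_mul]
    rw [Finset.sum_comm]
    refine Finset.sum_congr rfl fun x _ => ?_
    simp [Finset.sum_ite_eq]
  rw [entropy, entropy, neg_le_neg_iff, hsum]
  refine Finset.sum_le_sum fun x _ => ?_
  rcases (hp x).eq_or_lt with h | h
  · simp [← h]
  · exact mul_le_mul_of_nonneg_left (Real.log_le_log h (hpq x)) (hp x)

end Pushforward

section Margin

variable {d N : ℕ} {μ : (Fin N → Fin d) → ℝ}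

lemma margin_eq_map (μ : (Fin N → Fin d) → ℝ) (S : Finset (Fin N)) :
    margin μ S = fun y => ∑ x, if (fun i : { i // i ∈ S } => x i) = y then μ x else 0 := by
  simp [margin, funext_iff]

lemma isPMF_margin (hμ : IsPMF μ) (S : Finset (Fin N)) : IsPMF (margin μ S) :=
  margin_eq_map μ S ▸ hμ.map _

lemma entropy_margin_le (hμ : IsPMF μ) (S : Finset (Fin N)) :
    entropy (margin μ S) ≤ entropy μ :=
  margin_eq_map μ S ▸ entropy_map_le hμ.1 _

lemma entropy_le_card_mul_log {ι : Type*} [Fintype ι] [DecidableEq ι] {p : (ι → Fin d) → ℝ}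
    (hp : IsPMF p) :
    entropy p ≤ Fintype.card ι * Real.log d := by
  simpa [Fintype.card_fun, Real.log_pow] using entropy_le_log_card hp

lemma entropy_margin_le_card_mul_log (hμ : IsPMF μ) (S : Finset (Fin N)) :
    entropy (margin μ S) ≤ S.card * Real.log d := by
  simpa using entropy_le_card_mul_log (ι := { i // i ∈ S }) (isPMF_margin hμ S)

lemma entropy_le_mul_log (hμ : IsPMF μ) : entropy μ ≤ N * Real.log d := by
  simpa using entropy_le_card_mul_log (ι := Fin N) hμ

end Margin

section Coefficients

variable {lam : Measure ℝ}

lemma IsIntricacyMeasure.ae_mem_Icc (hlam : IsIntricacyMeasure lam) :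
    ∀ᵐ t ∂lam, t ∈ Set.Icc (0 : ℝ) 1 :=
  measure_eq_zero_iff_ae_notMem.1 hlam.2.1 |>.mono fun _ h => not_not.1 h

lemma IsIntricacyMeasure.integrable (hlam : IsIntricacyMeasure lam) {f : ℝ → ℝ}
    (hf : Continuous f) : Integrable f lam := by
  have := hlam.1
  obtain ⟨C, hC⟩ := (isCompact_Icc (a := (0 : ℝ)) (b := 1)).exists_bound_of_continuousOn
    hf.continuousOn
  refine Integrable.mono' (integrable_const C) hf.aestronglyMeasurable ?_
  filter_upwards [hlam.ae_mem_Icc] with t ht using hC t ht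

lemma cNk_nonneg (hlam : IsIntricacyMeasure lam) (N k : ℕ) : 0 ≤ cNk lam N k := by
  refine integral_nonneg_of_ae ?_
  filter_upwards [hlam.ae_mem_Icc] with t ht
  exact mul_nonneg (pow_nonneg ht.1 _) (pow_nonneg (by linarith [ht.2]) _)

lemma cNk_symm (hlam : IsIntricacyMeasure lam) {N k : ℕ} (hk : k ≤ N) :
    cNk lam N (N - k) = cNk lam N k := by
  rw [cNk, cNk]
  conv_lhs => rw [← hlam.2.2.1]
  rw [integral_map (by fun_prop) (by fun_prop)]
  simp only [Nat.sub_sub_self hk, sub_sub_cancel, mul_comm]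

lemma sum_choose_mul_cNk (hlam : IsIntricacyMeasure lam) (N : ℕ) :
    ∑ k ∈ Finset.range (N + 1), (N.choose k : ℝ) * cNk lam N k = 1 := by
  have := hlam.1
  simp only [cNk, ← integral_const_mul]
  rw [← integral_finsetSum _ fun k _ => hlam.integrable (by fun_prop)]
  have binomial : ∀ t : ℝ,
      ∑ k ∈ Finset.range (N + 1), (N.choose k : ℝ) * (t ^ k * (1 - t) ^ (N - k)) = 1 := by
    intro t
    simpa [mul_comm, mul_left_comm] using (add_pow t (1 - t) N).symm
  simp [binomial]

lemma sum_finset_card_eq_sum_choose (N : ℕ) (g : ℕ → ℝ) :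
    ∑ S : Finset (Fin N), g S.card = ∑ k ∈ Finset.range (N + 1), (N.choose k : ℝ) * g k := by
  simpa using Finset.sum_powerset_apply_card g (x := (Finset.univ : Finset (Fin N)))

lemma sum_cNk_card (hlam : IsIntricacyMeasure lam) (N : ℕ) :
    ∑ S : Finset (Fin N), cNk lam N S.card = 1 := by
  rw [sum_finset_card_eq_sum_choose N (cNk lam N), sum_choose_mul_cNk hlam]

lemma cNk_card_compl (hlam : IsIntricacyMeasure lam) {N : ℕ} (S : Finset (Fin N)) :
    cNk lam N Sᶜ.card = cNk lam N S.card := by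
  rw [Finset.card_compl, Fintype.card_fin, cNk_symm hlam (card_finset_fin_le S)]

end Coefficients

section Intricacy

variable {lam : Measure ℝ} {d N : ℕ} {μ : (Fin N → Fin d) → ℝ}

lemma intricacy_eq (hlam : IsIntricacyMeasure lam) (μ : (Fin N → Fin d) → ℝ) :
    intricacy lam μ = 2 * ∑ S : Finset (Fin N), cNk lam N S.card * entropy (margin μ S)
      - entropy μ := by
  have hcompl : ∑ S : Finset (Fin N), cNk lam N S.card * entropy (margin μ Sᶜ)
      = ∑ S : Finset (Fin N), cNk lam N S.card * entropy (margin μ S) := by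
    refine Fintype.sum_bijective compl compl_involutive.bijective _ _ fun S => ?_
    rw [cNk_card_compl hlam]
  simp only [intricacy, MIS, mul_sub, mul_add, Finset.sum_sub_distrib, Finset.sum_add_distrib,
    ← Finset.sum_mul, sum_cNk_card hlam, hcompl]
  ring

lemma neg_entropy_le_intricacy (hlam : IsIntricacyMeasure lam) (hμ : IsPMF μ) :
    -entropy μ ≤ intricacy lam μ := by
  rw [intricacy_eq hlam]
  have : 0 ≤ ∑ S : Finset (Fin N), cNk lam N S.card * entropy (margin μ S) :=
    Finset.sum_nonneg fun S _ =>
      mul_nonneg (cNk_nonneg hlam _ _) (entropy_nonneg (isPMF_margin hμ S))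
  linarith

lemma neg_one_le_intricacy_div (hlam : IsIntricacyMeasure lam) (hd : 2 ≤ d) (hN : 0 < N)
    (hμ : IsPMF μ) : -1 ≤ intricacy lam μ / (N * Real.log d) := by
  have hL : 0 < (N : ℝ) * Real.log d :=
    mul_pos (by exact_mod_cast hN) (Real.log_pos (by exact_mod_cast hd))
  rw [le_div_iff₀ hL]
  linarith [neg_entropy_le_intricacy hlam hμ, entropy_le_mul_log hμ]

lemma entropy_margin_div_le_min (hd : 2 ≤ d) (hN : 0 < N) (hμ : IsPMF μ) (S : Finset (Fin N)) :
    entropy (margin μ S) / (N * Real.log d)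
      ≤ min ((S.card : ℝ) / N) (entropy μ / (N * Real.log d)) := by
  have hlog : 0 < Real.log d := Real.log_pos (by exact_mod_cast hd)
  have hL : 0 < (N : ℝ) * Real.log d := mul_pos (by exact_mod_cast hN) hlog
  refine le_min ?_ (by gcongr; exact entropy_margin_le hμ S)
  calc entropy (margin μ S) / (N * Real.log d) ≤ S.card * Real.log d / (N * Real.log d) := by
        gcongr; exact entropy_margin_le_card_mul_log hμ S
    _ = S.card / N := mul_div_mul_right _ _ hlog.ne'

lemma intricacy_div_le_icN (hlam : IsIntricacyMeasure lam) (hd : 2 ≤ d) (hN : 0 < N)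
    (hμ : IsPMF μ) :
    intricacy lam μ / (N * Real.log d) ≤ icN lam N (entropy μ / (N * Real.log d)) := by
  set h := entropy μ / (N * Real.log d)
  calc intricacy lam μ / (N * Real.log d)
      = 2 * ∑ S : Finset (Fin N), cNk lam N S.card * (entropy (margin μ S) / (N * Real.log d))
          - h := by
        simp only [intricacy_eq hlam, sub_div, mul_div_assoc, Finset.sum_div, h]
    _ ≤ 2 * ∑ S : Finset (Fin N), cNk lam N S.card * min ((S.card : ℝ) / N) h - h := by
        gcongr with S
        · exact cNk_nonneg hlam _ _
        · exact entropy_margin_div_le_min hd hN hμ S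
    _ = icN lam N h := by
        rw [icN, sum_finset_card_eq_sum_choose N fun k => cNk lam N k * min ((k : ℝ) / N) h]
        simp only [mul_left_comm, mul_assoc]

end Intricacy

section Limit

variable {lam : Measure ℝ}

lemma tendsto_sum_cNk_mul_choose_mul (hlam : IsIntricacyMeasure lam) {f : ℝ → ℝ}
    (hf : Continuous f) :
    Tendsto (fun N : ℕ => ∑ k ∈ Finset.range (N + 1), cNk lam N k * N.choose k * f (k / N))
      atTop (𝓝 (∫ t, f t ∂lam)) := by
  have := hlam.1
  set g : C(unitInterval, ℝ) := ⟨fun t => f t, by fun_prop⟩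
  set B : ℕ → ℝ → ℝ := fun N t =>
    ∑ k ∈ Finset.range (N + 1), f (k / N) * (N.choose k * t ^ k * (1 - t) ^ (N - k))
  have hB_int : ∀ N, Integrable (B N) lam := fun N => hlam.integrable (by fun_prop)
  have hsum_eq : ∀ N : ℕ, ∑ k ∈ Finset.range (N + 1), cNk lam N k * N.choose k * f (k / N)
      = ∫ t, B N t ∂lam := fun N => by
    rw [integral_finsetSum _ fun k _ => hlam.integrable (by fun_prop)]
    refine Finset.sum_congr rfl fun k _ => ?_
    rw [mul_assoc, cNk, ← integral_mul_const]
    congr 1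
    ext t
    ring
  have hB_eq : ∀ N (t : unitInterval), B N t = bernsteinApproximation N g t := fun N t => by
    simp only [B, bernsteinApproximation.apply]
    rw [← Fin.sum_univ_eq_sum_range]
    refine Finset.sum_congr rfl fun k _ => ?_
    simp [bernstein_apply, g, bernstein.z, mul_comm]
  have hdist : ∀ N,
      dist (∫ t, B N t ∂lam) (∫ t, f t ∂lam) ≤ ‖bernsteinApproximation N g - g‖ := fun N => by
    rw [dist_eq_norm, ← integral_sub (hB_int N) (hlam.integrable hf)]
    refine (norm_integral_le_of_norm_le_const (C := ‖bernsteinApproximation N g - g‖) ?_).trans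
      (by simp)
    filter_upwards [hlam.ae_mem_Icc] with t ht
    simpa [hB_eq N ⟨t, ht⟩, g] using
      (bernsteinApproximation N g - g).norm_coe_le_norm ⟨t, ht⟩
  have hbern : Tendsto (fun N : ℕ => ‖bernsteinApproximation N g - g‖) atTop (𝓝 0) :=
    tendsto_iff_norm_sub_tendsto_zero.1 (bernsteinApproximation_uniform g)
  simp only [hsum_eq]
  exact tendsto_iff_dist_tendsto_zero.2 (squeeze_zero (fun _ => dist_nonneg) hdist hbern)

lemma tendsto_icN (hlam : IsIntricacyMeasure lam) (x : ℝ) :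
    Tendsto (fun N => icN lam N x) atTop (𝓝 (ic lam x)) :=
  ((tendsto_sum_cNk_mul_choose_mul hlam (continuous_id.min continuous_const)).const_mul 2).sub_const
    x

lemma abs_icN_sub_icN_le (hlam : IsIntricacyMeasure lam) (N : ℕ) (a b : ℝ) :
    |icN lam N a - icN lam N b| ≤ 3 * |a - b| := by
  have hmin : ∀ s : ℝ, |min s a - min s b| ≤ |a - b| := fun s => by
    simpa using abs_min_sub_min_le_max s a s b
  have hsum : |∑ k ∈ Finset.range (N + 1), cNk lam N k * N.choose k * min ((k : ℝ) / N) a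
      - ∑ k ∈ Finset.range (N + 1), cNk lam N k * N.choose k * min ((k : ℝ) / N) b| ≤ |a - b| :=
    calc _ = |∑ k ∈ Finset.range (N + 1),
            cNk lam N k * N.choose k * (min ((k : ℝ) / N) a - min ((k : ℝ) / N) b)| := by
          simp only [mul_sub, Finset.sum_sub_distrib]
      _ ≤ ∑ k ∈ Finset.range (N + 1), (N.choose k : ℝ) * cNk lam N k * |a - b| := by
          refine (Finset.abs_sum_le_sum_abs _ _).trans (Finset.sum_le_sum fun k _ => ?_)
          have := cNk_nonneg hlam N k
          rw [abs_mul, abs_of_nonneg (by positivity), mul_comm (cNk _ _ _)]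
          exact mul_le_mul_of_nonneg_left (hmin _) (by positivity)
      _ = |a - b| := by rw [← Finset.sum_mul, sum_choose_mul_cNk hlam, one_mul]
  calc |icN lam N a - icN lam N b|
      = |2 * (∑ k ∈ Finset.range (N + 1), cNk lam N k * N.choose k * min ((k : ℝ) / N) a
          - ∑ k ∈ Finset.range (N + 1), cNk lam N k * N.choose k * min ((k : ℝ) / N) b)
          - (a - b)| := by rw [icN, icN]; congr 1; ring
    _ ≤ 2 * |a - b| + |a - b| := by
        refine (abs_sub _ _).trans (add_le_add ?_ le_rfl)
        rw [abs_mul, abs_two]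
        gcongr
    _ = 3 * |a - b| := by ring

lemma tendsto_icN_of_tendsto (hlam : IsIntricacyMeasure lam) {h : ℕ → ℝ} {x : ℝ}
    (hh : Tendsto h atTop (𝓝 x)) :
    Tendsto (fun N => icN lam N (h N)) atTop (𝓝 (ic lam x)) := by
  have hdiff : Tendsto (fun N => icN lam N (h N) - icN lam N x) atTop (𝓝 0) := by
    refine squeeze_zero_norm
      (fun N => (Real.norm_eq_abs _).trans_le (abs_icN_sub_icN_le hlam N (h N) x)) ?_
    simpa using ((hh.sub_const x).abs).const_mul 3
  simpa using hdiff.add (tendsto_icN hlam x)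

end Limit

theorem stmt7_general (lam : Measure ℝ) (hlam : IsIntricacyMeasure lam)
    (d : ℕ) (hd : 2 ≤ d) (x : ℝ)
    (X : (N : ℕ) → (Fin N → Fin d) → ℝ) (hpmf : ∀ N, IsPMF (X N))
    (hent : Tendsto (fun N : ℕ => entropy (X N) / (N * Real.log d)) atTop (nhds x)) :
    Filter.limsup (fun N : ℕ => intricacy lam (X N) / (N * Real.log d)) atTop ≤ ic lam x := by
  have hupper : ∀ᶠ N in atTop, intricacy lam (X N) / (N * Real.log d)
      ≤ icN lam N (entropy (X N) / (N * Real.log d)) := by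
    filter_upwards [eventually_gt_atTop 0] with N hN using
      intricacy_div_le_icN hlam hd hN (hpmf N)
  -- without a lower bound, `limsup` in `ℝ` would take a junk value
  have hlower : ∀ᶠ N in atTop, -1 ≤ intricacy lam (X N) / (N * Real.log d) := by
    filter_upwards [eventually_gt_atTop 0] with N hN using
      neg_one_le_intricacy_div hlam hd hN (hpmf N)
  have hlim := tendsto_icN_of_tendsto hlam hent
  calc Filter.limsup (fun N : ℕ => intricacy lam (X N) / (N * Real.log d)) atTop
      ≤ Filter.limsup (fun N => icN lam N (entropy (X N) / (N * Real.log d))) atTop :=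
        limsup_le_limsup hupper (isCoboundedUnder_le_of_eventually_le _ hlower)
          hlim.isBoundedUnder_le
    _ = ic lam x := hlim.limsup_eq

/-- for a non-null intricacy, `d ≥ 2`, `x ∈ [0,1]` and any sequence
`X^N ∈ X(d,N)` with `H(X^N)/(N log d) → x`, one has
`limsup_N I^c(X^N)/(N log d) ≤ i^c(x)`. -/
theorem stmt7 (lam : Measure ℝ) (hlam : IsIntricacyMeasure lam)
    (d : ℕ) (hd : 2 ≤ d) (x : ℝ) (hx : x ∈ Set.Icc (0:ℝ) 1)
    (X : (N : ℕ) → (Fin N → Fin d) → ℝ) (hpmf : ∀ N, IsPMF (X N))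
    (hent : Tendsto (fun N : ℕ => entropy (X N) / (N * Real.log d)) atTop (nhds x)) :
    Filter.limsup (fun N : ℕ => intricacy lam (X N) / (N * Real.log d)) atTop ≤ ic lam x :=
  stmt7_general lam hlam d hd x X hpmf hent
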